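/- arXiv:1911.10456 — 2 statements merged into one kernel-verified Lean document; each statement's English description precedes it below -/
import Mathlib

section
/- Let q = p^m be a power of a prime p, let n be a positive integer with n ≡ −2 (mod p), let a ∈ F_{q²} satisfy a^{q+1} = −1, and let L be an n×n unitary matrix over F_{q²}. Then the code generated by the n×2n block matrix G = (Jₙ + Iₙ | aL) is a Hermitian self-dual code of length 2n and F_{q²}-dimension n. -/
open Matrix BigOperators Finset

def hermInner (q : ℕ) {F : Type} [CommRing F] {ι : Type} [Fintype ι]
    (x y : ι → F) : F :=
  ∑ i, x i * y i ^ q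

def hermDual (q : ℕ) {F : Type} [CommRing F] {ι : Type} [Fintype ι]
    (C : Set (ι → F)) : Set (ι → F) :=
  {y | ∀ x ∈ C, hermInner q x y = 0}

def rowSpan {F : Type} [Field F] {k : ℕ} {ι : Type} (G : Matrix (Fin k) ι F) :
    Submodule F (ι → F) :=
  Submodule.span F (Set.range fun i => G i)

/-!
The map `σ : x ↦ x ^ q` is an involutive automorphism of `F`, so `y` is Hermitian-orthogonal
to the rows of `G` iff `Ḡ y = 0`, where `Ḡ = G.map σ`: the Hermitian dual of the row space is
`ker Ḡ`. Writing `G = (J + I | a L)`, we get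
`G Ḡᵀ = (J + I)² + a ^ (q + 1) L L̄ᵀ = (n + 2) J + I - I = 0`, since `J² = n J` and `n = -2`
in `F`; so the row space lies in `ker Ḡ`. Both `G` and `Ḡ` have rank `n` because their right
blocks `a L` and `σ a L̄` are invertible, hence both spaces have dimension `n = 2n - n`.
-/

section HermitianDual

variable {F : Type} [Field F] {ι : Type} [Fintype ι] {k : ℕ}

theorem mem_hermDual_rowSpan_iff (q : ℕ) (G : Matrix (Fin k) ι F) (y : ι → F) :
    y ∈ hermDual q (rowSpan G : Set (ι → F)) ↔ G *ᵥ (fun i => y i ^ q) = 0 := by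
  have hrow : rowSpan G = LinearMap.range G.vecMulLinear := (range_vecMulLinear G).symm
  rw [← dotProduct_eq_zero_iff]
  simp only [hermDual, hrow, Set.mem_ofPred_eq, SetLike.mem_coe, LinearMap.mem_range,
    forall_exists_index, forall_apply_eq_imp_iff, vecMulLinear_apply]
  refine forall_congr' fun c => ?_
  rw [dotProduct_comm, dotProduct_mulVec]
  rfl

theorem hermDual_rowSpan_eq_ker {q : ℕ} {σ : F →+* F} (hσ : ∀ x, σ (x ^ q) = x)
    (G : Matrix (Fin k) ι F) :
    hermDual q (rowSpan G : Set (ι → F)) = LinearMap.ker (G.map σ).mulVecLin := by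
  ext y
  rw [mem_hermDual_rowSpan_iff, SetLike.mem_coe, LinearMap.mem_ker, mulVecLin_apply]
  have hmap : σ ∘ (G *ᵥ fun i => y i ^ q) = G.map σ *ᵥ y := by
    funext i
    simp only [Function.comp_apply, RingHom.map_mulVec]
    congr 1; funext j; exact hσ (y j)
  rw [← hmap, ← (σ.injective.comp_left).eq_iff]
  simp

theorem finrank_rowSpan (G : Matrix (Fin k) ι F) : Module.finrank F (rowSpan G) = G.rank :=
  (G.rank_eq_finrank_span_row).symm

theorem rowSpan_eq_hermDual {q : ℕ} {σ : F →+* F} (hσ : ∀ x, σ (x ^ q) = x)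
    (G : Matrix (Fin k) ι F) (horth : G * (G.map σ)ᵀ = 0) (hG : G.rank = k)
    (hGσ : (G.map σ).rank = k) (hι : Fintype.card ι = k + k) :
    (rowSpan G : Set (ι → F)) = hermDual q (rowSpan G) := by
  rw [hermDual_rowSpan_eq_ker hσ, SetLike.coe_set_eq]
  apply Submodule.eq_of_le_of_finrank_eq
  · rw [rowSpan, Submodule.span_le]
    rintro _ ⟨j, rfl⟩
    rw [SetLike.mem_coe, LinearMap.mem_ker, mulVecLin_apply]
    funext i
    simpa [mulVec, dotProduct, mul_apply, mul_comm] using congrFun (congrFun horth j) i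
  · have hrank := LinearMap.finrank_range_add_finrank_ker (G.map σ).mulVecLin
    rw [← rank, hGσ, Module.finrank_fintype_fun_eq_card, hι] at hrank
    rw [finrank_rowSpan, hG]
    omega

end HermitianDual

theorem rank_fromCols_of_isUnit {R m n : Type} [CommRing R] [StrongRankCondition R] [Fintype m]
    [Fintype n] [DecidableEq m] (A : Matrix m n R) {B : Matrix m m R} (hB : IsUnit B) :
    (fromCols A B).rank = Fintype.card m :=
  le_antisymm (rank_le_card_height _) <|
    rank_of_isUnit B hB ▸ rank_submatrix_le (fromCols A B) id Sum.inr

section AllOnes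

variable {R ι : Type} [Fintype ι]

theorem of_one_mul_of_one [Semiring R] :
    (of 1 : Matrix ι ι R) * of 1 = (Fintype.card ι : R) • of 1 := by
  ext i j
  simp [mul_apply]

theorem of_one_add_one_mul_self [CommRing R] [DecidableEq ι] (h : (Fintype.card ι : R) = -2) :
    (of 1 + 1 : Matrix ι ι R) * (of 1 + 1) = 1 := by
  rw [add_mul, mul_add, mul_add, of_one_mul_of_one, h, mul_one, one_mul, mul_one]
  module

end AllOnes

theorem pow_pow_eq_self_of_card_eq_sq {F : Type} [Field F] [Fintype F] {q : ℕ}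
    (hF : Fintype.card F = q ^ 2) (x : F) : (x ^ q) ^ q = x := by
  rw [← pow_mul, ← sq, ← hF, FiniteField.pow_card]

theorem fromCols_mul_map_transpose_eq_zero {R ι : Type} [CommRing R] [Fintype ι] [DecidableEq ι]
    {σ : R →+* R} (hι : (Fintype.card ι : R) = -2) {a : R} (ha : a * σ a = -1)
    {L : Matrix ι ι R} (hL : L * (L.map σ)ᵀ = 1) :
    fromCols ((of 1 : Matrix ι ι R) + 1) (a • L) *
      ((fromCols ((of 1 : Matrix ι ι R) + 1) (a • L)).map σ)ᵀ = 0 := by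
  have hJ : ((of 1 : Matrix ι ι R) + 1).map σ = of 1 + 1 := by
    ext i j
    simp [one_apply, apply_ite σ]
  have hJt : ((of 1 : Matrix ι ι R) + 1)ᵀ = of 1 + 1 := by
    ext i j
    simp [one_apply, eq_comm]
  rw [fromCols_map, hJ, map_smul' _ _ _ (map_mul σ), transpose_fromCols, fromCols_mul_fromRows,
    hJt, of_one_add_one_mul_self hι, transpose_smul, smul_mul_smul, hL, ha]
  simp

theorem eq_fromCols_of_one_add_one_smul {R ι : Type} [Ring R] [DecidableEq ι] {a : R}
    {L : Matrix ι ι R} {G : Matrix ι (ι ⊕ ι) R}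
    (hG : ∀ i j, G i (Sum.inl j) = (if i = j then 2 else 1) ∧ G i (Sum.inr j) = a * L i j) :
    G = fromCols (of 1 + 1) (a • L) := by
  ext i (j | j)
  · simp only [(hG i j).1, fromCols_apply_inl, Matrix.add_apply, of_apply, Pi.one_apply,
      one_apply]
    split_ifs <;> norm_num
  · simp [(hG i j).2]

theorem isUnit_smul_of_mul_eq_one {F ι : Type} [Field F] [Fintype ι] [DecidableEq ι] {a : F}
    (ha : a ≠ 0) {L M : Matrix ι ι F} (hL : L * M = 1) : IsUnit (a • L) := by
  rw [isUnit_iff_isUnit_det, det_smul]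
  exact (ha.isUnit.pow _).mul (isUnit_det_of_right_inverse hL)

theorem stmt6_general (p m q n : ℕ) (hp : p.Prime) (hq : q = p ^ m)
    (hnp : (n : ZMod p) = -2)
    (F : Type) [Field F] [Fintype F] (hF : Fintype.card F = q ^ 2)
    (a : F) (ha : a ^ (q + 1) = -1)
    (L : Matrix (Fin n) (Fin n) F) (hL : L * (L.map (· ^ q))ᵀ = 1)
    (G : Matrix (Fin n) (Fin n ⊕ Fin n) F)
    (hG : ∀ i j, G i (Sum.inl j) = (if i = j then 2 else 1) ∧
      G i (Sum.inr j) = a * L i j) :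
    (rowSpan G : Set (Fin n ⊕ Fin n → F)) = hermDual q (rowSpan G) ∧
    Module.finrank F (rowSpan G) = n := by
  have : Fact p.Prime := ⟨hp⟩
  have : CharP F p := charP_of_card_eq_prime_pow (f := m * 2) (by rw [hF, hq, pow_mul])
  let σ := iterateFrobenius F p m
  have hσ : ⇑σ = (· ^ q) := by rw [hq]; rfl
  have hcard : (Fintype.card (Fin n) : F) = -2 := by
    have := congrArg (ZMod.castHom (dvd_refl p) F) hnp
    rwa [map_natCast, map_neg, map_ofNat, ← Fintype.card_fin n] at this
  have haσ : a * σ a = -1 := by rw [hσ, ← pow_succ', ha]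
  have hLσ : L * (L.map σ)ᵀ = 1 := by rwa [hσ]
  have hLunit : IsUnit (a • L) :=
    isUnit_smul_of_mul_eq_one (left_ne_zero_of_mul (haσ ▸ neg_ne_zero.2 one_ne_zero)) hL
  have hGblock := eq_fromCols_of_one_add_one_smul hG
  have hrank : G.rank = n := by
    rw [hGblock, rank_fromCols_of_isUnit _ hLunit, Fintype.card_fin]
  have hrankσ : (G.map σ).rank = n := by
    rw [hGblock, fromCols_map,
      rank_fromCols_of_isUnit _ (B := (a • L).map σ) (hLunit.map σ.mapMatrix), Fintype.card_fin]
  refine ⟨rowSpan_eq_hermDual (fun x => by rw [hσ]; exact pow_pow_eq_self_of_card_eq_sq hF x) G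
    (hGblock ▸ fromCols_mul_map_transpose_eq_zero hcard haσ hLσ) hrank hrankσ (by simp),
    (finrank_rowSpan G).trans hrank⟩

/-- if `n ≡ -2 (mod p)`, `a^{q+1} = -1` and `L` is an `n×n` unitary
matrix over `F_{q²}`, then the code generated by `G = (Jₙ + Iₙ | aL)` is a
Hermitian self-dual code of length `2n` and dimension `n`. -/
theorem stmt6 (p m q n : ℕ) (hp : p.Prime) (hm : 0 < m) (hq : q = p ^ m)
    (hn : 0 < n) (hnp : (n : ZMod p) = -2)
    (F : Type) [Field F] [Fintype F] (hF : Fintype.card F = q ^ 2)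
    (a : F) (ha : a ^ (q + 1) = -1)
    (L : Matrix (Fin n) (Fin n) F) (hL : L * (L.map (· ^ q))ᵀ = 1)
    (G : Matrix (Fin n) (Fin n ⊕ Fin n) F)
    (hG : ∀ i j, G i (Sum.inl j) = (if i = j then 2 else 1) ∧
      G i (Sum.inr j) = a * L i j) :
    (rowSpan G : Set (Fin n ⊕ Fin n → F)) = hermDual q (rowSpan G) ∧
    Module.finrank F (rowSpan G) = n :=
  stmt6_general p m q n hp hq hnp F hF a ha L hL G hG
end

section
/- Let q = p^m be a power of a prime p and a ∈ F_{q²} with a^{q+1} = −1. Let L be an n×n unitary matrix over F_{q²} with rows L₁,…,Lₙ, and suppose α, β, γ, δ, λ, θ ∈ F_{q²} satisfy δ^{q+1} + (n+2) + γ^{q+1} = 0, θ^{q+1} + n·β^{q+1} + α^{q+1} + n·λ^{q+1} = 0, and θδ^q + (n+1)β + αγ^q + λa^q = 0 (integers read in F_{q²}). Then the code generated by the bordered matrix H (with first row (θ, β,…,β, α, λ(L₁+⋯+Lₙ)) and (i+1)-st row (δ, (Jₙ+Iₙ)ᵢ, γ, aLᵢ) for 1 ≤ i ≤ n) is a Hermitian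 self-orthogonal code of length 2n+2 and dimension at least n. Moreover, if δ = 0 and θ ≠ 0, then this code is Hermitian self-dual of length 2n+2 and dimension n+1. -/
open Matrix BigOperators Finset

/-!
Since `|F| = q²`, `σ x = x ^ q` is an involutive automorphism of `F` and `hermInner q x y` is the
`σ`-Hermitian form `x ⬝ᵥ σ y`. By unitarity of `L` we have `hermInner (v L) (w L) = hermInner v w`,
so the Hermitian Gram matrix of the rows of `H` collapses to three scalars, which are exactly the
three hypotheses (the diagonal of the lower block also uses `a^{q+1} = -1`). Pairwise orthogonal
generators span a self-orthogonal code. The last `n` rows are independent because their last block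
`aL` is invertible, and if `δ = 0 ≠ θ` the first coordinate separates the first row from them.
Finally the Hermitian dual of the row space is the `σ`-twist of `ker H`, so it has as many elements
as a code of dimension `(2n + 2) - (n + 1) = n + 1`, and the inclusion is an equality.
-/

theorem FiniteField.exists_ringHom_eq_pow_of_dvd_card {F : Type*} [Field F] [Fintype F] {q : ℕ}
    (hq : q ∣ Fintype.card F) : ∃ σ : F →+* F, ∀ x, σ x = x ^ q := by
  obtain ⟨k, hp, hcard⟩ := FiniteField.card F (ringChar F)
  obtain ⟨i, -, rfl⟩ := (Nat.dvd_prime_pow hp).1 (hcard ▸ hq)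
  have : ExpChar F (ringChar F) := ExpChar.prime hp
  exact ⟨iterateFrobenius F (ringChar F) i, fun x => iterateFrobenius_def _ _ x⟩

section HermInner

variable {R : Type} [CommRing R] {ι : Type} [Fintype ι] {q : ℕ}

theorem hermInner_smul_smul (c d : R) (x y : ι → R) :
    hermInner q (c • x) (d • y) = c * d ^ q * hermInner q x y := by
  simp only [hermInner, Pi.smul_apply, smul_eq_mul, mul_pow, Finset.mul_sum]
  exact Finset.sum_congr rfl fun _ _ => by ring

theorem hermInner_add_left (x y z : ι → R) :
    hermInner q (x + y) z = hermInner q x z + hermInner q y z := by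
  simp only [hermInner, Pi.add_apply, add_mul, Finset.sum_add_distrib]

theorem hermInner_one_one : hermInner q (1 : ι → R) 1 = Fintype.card ι := by
  simp [hermInner]

theorem hermInner_single_left [DecidableEq ι] (i : ι) (y : ι → R) :
    hermInner q (Pi.single i 1) y = y i ^ q := by
  simp [hermInner, Pi.single_apply]

theorem mem_hermDual_span_iff {S : Set (ι → R)} {y : ι → R} :
    y ∈ hermDual q (Submodule.span R S : Set (ι → R)) ↔ ∀ x ∈ S, hermInner q x y = 0 := by
  let f : (ι → R) →ₗ[R] R := (dotProductBilin R R).flip fun i => y i ^ q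
  have hf : ∀ x, f x = hermInner q x y := fun _ => rfl
  refine ⟨fun hy x hx => hy x (Submodule.subset_span hx), fun hS x hx => ?_⟩
  rw [← hf, ← LinearMap.mem_ker]
  exact (Submodule.span_le (p := LinearMap.ker f)).2 (fun x hx => hS x hx) hx

variable {σ : R →+* R} (hσ : ∀ x, σ x = x ^ q)
include hσ

theorem hermInner_eq_dotProduct (x y : ι → R) : hermInner q x y = x ⬝ᵥ (σ ∘ y) := by
  simp [hermInner, dotProduct, hσ]

theorem hermInner_add_right (x y z : ι → R) :
    hermInner q x (y + z) = hermInner q x y + hermInner q x z := by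
  simp only [hermInner, Pi.add_apply, ← hσ, map_add, mul_add, Finset.sum_add_distrib]

theorem hermInner_single_right [DecidableEq ι] (x : ι → R) (j : ι) :
    hermInner q x (Pi.single j 1) = x j := by
  rw [hermInner_eq_dotProduct hσ]
  have : σ ∘ Pi.single j 1 = Pi.single j 1 := by
    ext i; simp [Pi.single_apply, apply_ite σ]
  simp [this]

theorem hermInner_conj_symm (hσσ : Function.Involutive σ) (x y : ι → R) :
    σ (hermInner q y x) = hermInner q x y := by
  simp only [hermInner_eq_dotProduct hσ, RingHom.map_dotProduct, Function.comp_def, hσσ _]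
  exact dotProduct_comm _ _

theorem hermInner_vecMul_vecMul [DecidableEq ι] {L : Matrix ι ι R} (hL : L * (L.map σ)ᵀ = 1)
    (v w : ι → R) :
    hermInner q (v ᵥ* L) (w ᵥ* L) = hermInner q v w := by
  have : σ ∘ (w ᵥ* L) = (L.map σ)ᵀ *ᵥ (σ ∘ w) := by
    ext j; rw [Function.comp_apply, RingHom.map_vecMul, mulVec_transpose]
  rw [hermInner_eq_dotProduct hσ, hermInner_eq_dotProduct hσ, this, ← dotProduct_mulVec,
    mulVec_mulVec, hL, one_mulVec]

end HermInner

section BorderedMatrix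

variable {R : Type} [CommRing R] {ι : Type} [Fintype ι] {q : ℕ}

def borderedVec (s : R) (u : ι → R) (t : R) (v : ι → R) : (Unit ⊕ ι) ⊕ (Unit ⊕ ι) → R :=
  Sum.elim (Sum.elim (fun _ => s) u) (Sum.elim (fun _ => t) v)

theorem hermInner_borderedVec (s s' t t' : R) (u u' v v' : ι → R) :
    hermInner q (borderedVec s u t v) (borderedVec s' u' t' v') =
      s * s' ^ q + hermInner q u u' + (t * t' ^ q + hermInner q v v') := by
  simp [hermInner, borderedVec, Fintype.sum_sum_type]

variable [DecidableEq ι]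

/- The columns `(Unit ⊕ ι) ⊕ (Unit ⊕ ι)` are the paper's `2n + 2` columns. In the paper's notation
`1 ᵥ* L = L₁ + ⋯ + Lₙ`, `Pi.single i 1 ᵥ* L = Lᵢ` and `1 + Pi.single i 1 = (Jₙ + Iₙ)ᵢ`. -/
def headRow (θ β α lam : R) (L : Matrix ι ι R) : (Unit ⊕ ι) ⊕ (Unit ⊕ ι) → R :=
  borderedVec θ (β • 1) α (lam • (1 ᵥ* L))

def bodyRow (δ γ a : R) (L : Matrix ι ι R) (i : ι) : (Unit ⊕ ι) ⊕ (Unit ⊕ ι) → R :=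
  borderedVec δ (1 + Pi.single i 1) γ (a • (Pi.single i 1 ᵥ* L))

def borderedMatrix {n : ℕ} (θ β α lam δ γ a : R) (L : Matrix (Fin n) (Fin n) R) :
    Matrix (Fin (n + 1)) ((Unit ⊕ Fin n) ⊕ (Unit ⊕ Fin n)) R :=
  Fin.cons (headRow θ β α lam L) (bodyRow δ γ a L)

variable {σ : R →+* R} (hσ : ∀ x, σ x = x ^ q) {L : Matrix ι ι R} (hL : L * (L.map σ)ᵀ = 1)
include hσ hL

theorem hermInner_headRow_headRow (θ β α lam : R) :
    hermInner q (headRow θ β α lam L) (headRow θ β α lam L) =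
      θ ^ (q + 1) + Fintype.card ι * β ^ (q + 1) + α ^ (q + 1) +
        Fintype.card ι * lam ^ (q + 1) := by
  rw [headRow, hermInner_borderedVec, hermInner_smul_smul, hermInner_smul_smul,
    hermInner_vecMul_vecMul hσ hL, hermInner_one_one]
  ring

theorem hermInner_headRow_bodyRow (θ β α lam δ γ a : R) (i : ι) :
    hermInner q (headRow θ β α lam L) (bodyRow δ γ a L i) =
      θ * δ ^ q + (Fintype.card ι + 1) * β + α * γ ^ q + lam * a ^ q := by
  rw [headRow, bodyRow, hermInner_borderedVec, ← one_smul R (1 + _), hermInner_smul_smul,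
    hermInner_smul_smul, hermInner_vecMul_vecMul hσ hL, hermInner_add_right hσ,
    hermInner_one_one, hermInner_single_right hσ]
  simp only [Pi.one_apply]
  ring

theorem hermInner_bodyRow_bodyRow (δ γ a : R) (i j : ι) :
    hermInner q (bodyRow δ γ a L i) (bodyRow δ γ a L j) =
      δ ^ (q + 1) + (Fintype.card ι + 2) + γ ^ (q + 1) +
        (1 + a ^ (q + 1)) * (1 : Matrix ι ι R) i j := by
  rw [bodyRow, bodyRow, hermInner_borderedVec, hermInner_smul_smul, hermInner_vecMul_vecMul hσ hL,
    hermInner_add_left, hermInner_add_right hσ, hermInner_add_right hσ, hermInner_one_one,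
    hermInner_single_left, hermInner_single_right hσ, hermInner_single_right hσ]
  simp only [Pi.one_apply, one_pow, Pi.single_apply, one_apply, eq_comm (a := j)]
  ring

end BorderedMatrix

theorem hermInner_borderedMatrix_eq_zero {R : Type} [CommRing R] {q n : ℕ} {σ : R →+* R}
    (hσ : ∀ x, σ x = x ^ q) (hσσ : Function.Involutive σ)
    {L : Matrix (Fin n) (Fin n) R} (hL : L * (L.map σ)ᵀ = 1) {θ β α lam δ γ a : R}
    (ha : a ^ (q + 1) = -1)
    (h1 : δ ^ (q + 1) + ((n : R) + 2) + γ ^ (q + 1) = 0)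
    (h2 : θ ^ (q + 1) + (n : R) * β ^ (q + 1) + α ^ (q + 1) + (n : R) * lam ^ (q + 1) = 0)
    (h3 : θ * δ ^ q + ((n : R) + 1) * β + α * γ ^ q + lam * a ^ q = 0) (i j : Fin (n + 1)) :
    hermInner q (borderedMatrix θ β α lam δ γ a L i) (borderedMatrix θ β α lam δ γ a L j) = 0 := by
  induction i using Fin.cases <;> induction j using Fin.cases <;>
    simp only [borderedMatrix, Fin.cons_zero, Fin.cons_succ]
  · simpa [hermInner_headRow_headRow hσ hL] using h2
  · simpa [hermInner_headRow_bodyRow hσ hL] using h3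
  · rw [← hermInner_conj_symm hσ hσσ, hermInner_headRow_bodyRow hσ hL, Fintype.card_fin, h3,
      map_zero]
  · simpa [hermInner_bodyRow_bodyRow hσ hL, ha] using h1

theorem Submodule.ncard_eq_pow_finrank {K V : Type*} [DivisionRing K] [AddCommGroup V]
    [Module K V] [Module.Finite K V] (W : Submodule K V) :
    (W : Set V).ncard = Nat.card K ^ Module.finrank K W := by
  rw [← Nat.card_coe_set_eq, SetLike.coe_sort_coe, Module.natCard_eq_pow_finrank (K := K)]

section RowSpan

variable {F : Type} [Field F] {ι : Type} [Fintype ι] {q k : ℕ} {σ : F →+* F}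
  (hσ : ∀ x, σ x = x ^ q)
include hσ

theorem hermDual_rowSpan (H : Matrix (Fin k) ι F) :
    hermDual q (rowSpan H : Set (ι → F)) = (σ ∘ ·) ⁻¹' LinearMap.ker H.mulVecLin := by
  ext y
  simp only [rowSpan, mem_hermDual_span_iff, Set.forall_mem_range, Set.mem_preimage,
    SetLike.mem_coe, LinearMap.mem_ker, mulVecLin_apply, hermInner_eq_dotProduct hσ]
  exact ⟨fun h => funext h, fun h i => congrFun h i⟩

variable (hσσ : Function.Involutive σ)
include hσσ

theorem rowSpan_subset_hermDual (H : Matrix (Fin k) ι F)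
    (h : ∀ i j, hermInner q (H i) (H j) = 0) :
    (rowSpan H : Set (ι → F)) ⊆ hermDual q (rowSpan H) := by
  intro y hy
  rw [rowSpan, mem_hermDual_span_iff]
  rintro _ ⟨i, rfl⟩
  have hi : H i ∈ hermDual q (rowSpan H : Set (ι → F)) :=
    mem_hermDual_span_iff.2 (by rintro _ ⟨j, rfl⟩; exact h j i)
  rw [← hermInner_conj_symm hσ hσσ _ y, hi y hy, map_zero]

theorem rowSpan_eq_hermDual_s13 [Finite F] (H : Matrix (Fin k) ι F)
    (hsub : (rowSpan H : Set (ι → F)) ⊆ hermDual q (rowSpan H))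
    (hdim : 2 * Module.finrank F (rowSpan H) = Fintype.card ι) :
    (rowSpan H : Set (ι → F)) = hermDual q (rowSpan H) := by
  have hconj : Function.Involutive (σ ∘ · : (ι → F) → ι → F) :=
    fun y => funext fun i => hσσ (y i)
  have hker : Module.finrank F (LinearMap.ker H.mulVecLin) = Module.finrank F (rowSpan H) := by
    have hrank : H.rank = Module.finrank F (rowSpan H) := H.rank_eq_finrank_span_row
    have := LinearMap.finrank_range_add_finrank_ker H.mulVecLin
    rw [← Matrix.rank, hrank, Module.finrank_fintype_fun_eq_card] at this
    omega
  refine Set.eq_of_subset_of_ncard_le hsub (le_of_eq ?_) (Set.toFinite _)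
  rw [hermDual_rowSpan hσ, ← hconj.image_eq_preimage_symm,
    Set.ncard_image_of_injective _ hconj.injective, Submodule.ncard_eq_pow_finrank,
    Submodule.ncard_eq_pow_finrank, hker]

end RowSpan

section BorderedMatrixRank

variable {F : Type} [Field F]

theorem linearIndependent_bodyRow {ι : Type} [Fintype ι] [DecidableEq ι] {δ γ a : F}
    {L : Matrix ι ι F} (ha : a ≠ 0) (hL : IsUnit L) : LinearIndependent F (bodyRow δ γ a L) := by
  let restrict : ((Unit ⊕ ι) ⊕ (Unit ⊕ ι) → F) →ₗ[F] ι → F :=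
    LinearMap.funLeft F F (Sum.inr ∘ Sum.inr)
  have hrestrict : restrict ∘ bodyRow δ γ a L = (a • L).row := by
    ext i j
    simp [restrict, bodyRow, borderedVec, LinearMap.funLeft]
  have hunit : IsUnit (a • L) := by
    rw [isUnit_iff_isUnit_det, det_smul]
    exact (ha.isUnit.pow _).mul ((isUnit_iff_isUnit_det L).1 hL)
  refine LinearIndependent.of_comp restrict ?_
  rw [hrestrict]
  exact linearIndependent_rows_of_isUnit hunit

variable {n : ℕ} {θ β α lam δ γ a : F} {L : Matrix (Fin n) (Fin n) F}

theorem le_finrank_rowSpan_borderedMatrix (ha : a ≠ 0) (hL : IsUnit L) :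
    n ≤ Module.finrank F (rowSpan (borderedMatrix θ β α lam δ γ a L)) := by
  have hbody : Set.range (bodyRow δ γ a L) ⊆ Set.range (borderedMatrix θ β α lam δ γ a L) := by
    rintro _ ⟨i, rfl⟩
    exact ⟨i.succ, rfl⟩
  calc n = Fintype.card (Fin n) := (Fintype.card_fin n).symm
    _ = Module.finrank F (Submodule.span F (Set.range (bodyRow δ γ a L))) :=
      (finrank_span_eq_card (linearIndependent_bodyRow ha hL)).symm
    _ ≤ _ := Submodule.finrank_mono (Submodule.span_mono hbody)

theorem linearIndependent_borderedMatrix (hθ : θ ≠ 0) (ha : a ≠ 0) (hL : IsUnit L) :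
    LinearIndependent F (borderedMatrix θ β α lam 0 γ a L) := by
  rw [borderedMatrix, linearIndependent_finSucc, Fin.tail_cons, Fin.cons_zero]
  refine ⟨linearIndependent_bodyRow ha hL, fun hmem => hθ ?_⟩
  let firstCoord : ((Unit ⊕ Fin n) ⊕ (Unit ⊕ Fin n) → F) →ₗ[F] F :=
    LinearMap.proj (Sum.inl (Sum.inl ()))
  have hspan : Submodule.span F (Set.range (bodyRow 0 γ a L)) ≤ LinearMap.ker firstCoord := by
    rw [Submodule.span_le]
    rintro _ ⟨i, rfl⟩
    simp [firstCoord, bodyRow, borderedVec]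
  simpa [firstCoord, headRow, borderedVec] using hspan hmem

theorem finrank_rowSpan_borderedMatrix (hθ : θ ≠ 0) (ha : a ≠ 0) (hL : IsUnit L) :
    Module.finrank F (rowSpan (borderedMatrix θ β α lam 0 γ a L)) = n + 1 :=
  (finrank_span_eq_card (linearIndependent_borderedMatrix hθ ha hL)).trans (Fintype.card_fin _)

end BorderedMatrixRank

theorem stmt13_general (q n : ℕ)
    (F : Type) [Field F] [Fintype F] (hF : Fintype.card F = q ^ 2)
    (a : F) (ha : a ^ (q + 1) = -1)
    (L : Matrix (Fin n) (Fin n) F) (hL : L * (L.map (· ^ q))ᵀ = 1)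
    (α β γ δ lam θ : F)
    (h1 : δ ^ (q + 1) + ((n : F) + 2) + γ ^ (q + 1) = 0)
    (h2 : θ ^ (q + 1) + (n : F) * β ^ (q + 1) + α ^ (q + 1) + (n : F) * lam ^ (q + 1) = 0)
    (h3 : θ * δ ^ q + ((n : F) + 1) * β + α * γ ^ q + lam * a ^ q = 0)
    (H : Matrix (Fin (n + 1)) ((Unit ⊕ Fin n) ⊕ (Unit ⊕ Fin n)) F)
    (hH1 : H 0 (Sum.inl (Sum.inl ())) = θ)
    (hH2 : ∀ j, H 0 (Sum.inl (Sum.inr j)) = β)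
    (hH3 : H 0 (Sum.inr (Sum.inl ())) = α)
    (hH4 : ∀ j, H 0 (Sum.inr (Sum.inr j)) = lam * ∑ k, L k j)
    (hH5 : ∀ i : Fin n, H i.succ (Sum.inl (Sum.inl ())) = δ)
    (hH6 : ∀ i j : Fin n, H i.succ (Sum.inl (Sum.inr j)) = if j = i then 2 else 1)
    (hH7 : ∀ i : Fin n, H i.succ (Sum.inr (Sum.inl ())) = γ)
    (hH8 : ∀ i j : Fin n, H i.succ (Sum.inr (Sum.inr j)) = a * L i j) :
    ((rowSpan H : Set ((Unit ⊕ Fin n) ⊕ (Unit ⊕ Fin n) → F)) ⊆ hermDual q (rowSpan H) ∧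
      n ≤ Module.finrank F (rowSpan H)) ∧
    (δ = 0 → θ ≠ 0 →
      (rowSpan H : Set ((Unit ⊕ Fin n) ⊕ (Unit ⊕ Fin n) → F)) = hermDual q (rowSpan H) ∧
      Module.finrank F (rowSpan H) = n + 1) := by
  obtain ⟨σ, hσ⟩ := FiniteField.exists_ringHom_eq_pow_of_dvd_card (hF ▸ dvd_pow_self q two_ne_zero)
  have hσσ : Function.Involutive σ := fun x => by
    rw [hσ, hσ, ← pow_mul, ← sq, ← hF, FiniteField.pow_card]
  have hLσ : L * (L.map σ)ᵀ = 1 := by simpa only [← hσ] using hL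
  have hLunit : IsUnit L := .of_mul_eq_one _ hL
  have ha0 : a ≠ 0 := by rintro rfl; simp at ha
  have hH : H = borderedMatrix θ β α lam δ γ a L := by
    ext i c
    induction i using Fin.cases <;> rcases c with (⟨⟩ | j) | (⟨⟩ | j) <;>
      simp [borderedMatrix, headRow, bodyRow, borderedVec, hH1, hH2, hH3, hH4, hH5, hH6, hH7, hH8,
        Pi.single_apply, vecMul, dotProduct]
    split_ifs <;> norm_num
  subst hH
  have hsub := rowSpan_subset_hermDual hσ hσσ _
    (hermInner_borderedMatrix_eq_zero hσ hσσ hLσ ha h1 h2 h3)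
  refine ⟨⟨hsub, le_finrank_rowSpan_borderedMatrix ha0 hLunit⟩, fun hδ hθ => ?_⟩
  subst hδ
  have hdim : Module.finrank F (rowSpan (borderedMatrix θ β α lam 0 γ a L)) = n + 1 :=
    finrank_rowSpan_borderedMatrix hθ ha0 hLunit
  exact ⟨rowSpan_eq_hermDual_s13 hσ hσσ _ hsub (by simp [hdim]; ring), hdim⟩

/-- Lemma 5 of the paper. For `a^{q+1} = -1`, `L` an `n×n` unitary
matrix, and `α, β, γ, δ, λ, θ` satisfying the three equations (with `Jₙ + Iₙ`),
the bordered matrix `H` generates a Hermitian self-orthogonal code of length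
`2n+2` and dimension at least `n`; if moreover `δ = 0` and `θ ≠ 0`, the code is
Hermitian self-dual of dimension `n+1`. -/
theorem stmt13 (p m q n : ℕ) (hp : p.Prime) (hm : 0 < m) (hq : q = p ^ m)
    (F : Type) [Field F] [Fintype F] (hF : Fintype.card F = q ^ 2)
    (a : F) (ha : a ^ (q + 1) = -1)
    (L : Matrix (Fin n) (Fin n) F) (hL : L * (L.map (· ^ q))ᵀ = 1)
    (α β γ δ lam θ : F)
    (h1 : δ ^ (q + 1) + ((n : F) + 2) + γ ^ (q + 1) = 0)
    (h2 : θ ^ (q + 1) + (n : F) * β ^ (q + 1) + α ^ (q + 1) + (n : F) * lam ^ (q + 1) = 0)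
    (h3 : θ * δ ^ q + ((n : F) + 1) * β + α * γ ^ q + lam * a ^ q = 0)
    (H : Matrix (Fin (n + 1)) ((Unit ⊕ Fin n) ⊕ (Unit ⊕ Fin n)) F)
    (hH1 : H 0 (Sum.inl (Sum.inl ())) = θ)
    (hH2 : ∀ j, H 0 (Sum.inl (Sum.inr j)) = β)
    (hH3 : H 0 (Sum.inr (Sum.inl ())) = α)
    (hH4 : ∀ j, H 0 (Sum.inr (Sum.inr j)) = lam * ∑ k, L k j)
    (hH5 : ∀ i : Fin n, H i.succ (Sum.inl (Sum.inl ())) = δ)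
    (hH6 : ∀ i j : Fin n, H i.succ (Sum.inl (Sum.inr j)) = if j = i then 2 else 1)
    (hH7 : ∀ i : Fin n, H i.succ (Sum.inr (Sum.inl ())) = γ)
    (hH8 : ∀ i j : Fin n, H i.succ (Sum.inr (Sum.inr j)) = a * L i j) :
    ((rowSpan H : Set ((Unit ⊕ Fin n) ⊕ (Unit ⊕ Fin n) → F)) ⊆ hermDual q (rowSpan H) ∧
      n ≤ Module.finrank F (rowSpan H)) ∧
    (δ = 0 → θ ≠ 0 →
      (rowSpan H : Set ((Unit ⊕ Fin n) ⊕ (Unit ⊕ Fin n) → F)) = hermDual q (rowSpan H) ∧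
      Module.finrank F (rowSpan H) = n + 1) :=
  stmt13_general q n F hF a ha L hL α β γ δ lam θ h1 h2 h3 H hH1 hH2 hH3 hH4 hH5 hH6 hH7 hH8
end
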